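/- arXiv:math/0506007 — 3 statements merged into one kernel-verified Lean document; each statement's English description precedes it below -/
import Mathlib

section
/- Let p be an odd prime and G = V ⋊ ⟨c⟩ be the quotient of C₂ ≀ C_p by its center, with c of order p. If X = {c, w₂, …, w_n} with w₂,…,w_n ∈ V generates G, then every v ∈ V is a word of length at most 3(p−1) in X (inverses allowed), in which the elements w₂,…,w_n occur at most p−1 times in total. -/
/-- The base group of the wreath product `C₂ ≀ C_p`, written multiplicatively. -/
abbrev WreathBase (p : ℕ) := Multiplicative (ZMod p → ZMod 2)

/-- The shift automorphism of the base group, by `k`. -/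
def shiftAddAut (p : ℕ) (k : ZMod p) : AddAut (ZMod p → ZMod 2) where
  toFun f i := f (i + k)
  invFun f i := f (i - k)
  left_inv f := by funext i; simp
  right_inv f := by funext i; simp
  map_add' f g := rfl

/-- The action of `C_p` on the base group by cyclic shifts. -/
def wreathShift (p : ℕ) : Multiplicative (ZMod p) →* MulAut (WreathBase p) where
  toFun k := AddEquiv.toMultiplicative (shiftAddAut p k.toAdd)
  map_one' := by
    ext f
    simp [shiftAddAut, AddEquiv.toMultiplicative]
  map_mul' a b := by
    ext f
    simp only [shiftAddAut, AddEquiv.toMultiplicative]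
    exact congrArg _ (add_assoc ..).symm

/-- The wreath product `C₂ ≀ C_p`. -/
abbrev Wreath (p : ℕ) := WreathBase p ⋊[wreathShift p] Multiplicative (ZMod p)

/-- The quotient `G = W / Z(W)` of the wreath product by its center. -/
abbrev WreathQuot (p : ℕ) := Wreath p ⧸ Subgroup.center (Wreath p)

/-- The canonical generator `c`, the image in `G` of the generator of `C_p`. -/
def cElem (p : ℕ) : WreathQuot p :=
  QuotientGroup.mk' _ (SemidirectProduct.inr (Multiplicative.ofAdd (1 : ZMod p)))

/-- `V`, the image in `G` of the base group `C₂^p`. -/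
def Vsub (p : ℕ) : Subgroup (WreathQuot p) :=
  Subgroup.map (QuotientGroup.mk' _) (SemidirectProduct.inl (φ := wreathShift p)).range

/-!
`V` is `𝔽₂^p` modulo the constants, an `𝔽₂`-space of dimension `p - 1` on which `c` acts by the
cyclic shift. Since `c` normalises the span of the conjugates `cᵏ s c⁻ᵏ` (`s ∈ S`), every element
of `G = ⟨c, S⟩` is such a sum times a power of `c`; so these conjugates span `V`, and every `v ∈ V`
is a sum of at most `p - 1` of them. Grouping the summands by `k` gives
`v = B₀ c B₁ c ⋯ B_{p-1} c`, where `Bₖ` is the product of the chosen `s` with exponent `k`: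
a word with `p` letters `c` and at most `p - 1` letters from `S`, of length `≤ 2p - 1 ≤ 3(p - 1)`.
-/

open SemidirectProduct Multiplicative Module

@[to_additive]
theorem List.prod_map_range {M : Type*} [CommMonoid M] (f : ℕ → M) (n : ℕ) :
    ((List.range n).map f).prod = ∏ r ∈ Finset.range n, f r := by
  rw [Finset.prod_eq_multiset_prod, Finset.range_val, Multiset.range, Multiset.map_coe,
    Multiset.prod_coe]

section Words

variable {G : Type*} [Group G]

theorem prod_flatten_map_append_singleton (c : G) (seg : ℕ → List G) (n : ℕ) :
    ((List.range n).map fun r => seg r ++ [c]).flatten.prod =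
      ((List.range n).map fun r => c ^ r * (seg r).prod * (c ^ r)⁻¹).prod * c ^ n := by
  induction n with
  | zero => simp
  | succ n ih =>
    simp only [List.range_succ, List.map_append, List.flatten_append, List.prod_append, ih,
      List.map_cons, List.map_nil, List.flatten_cons, List.flatten_nil, List.append_nil,
      List.prod_cons, List.prod_nil]
    group

theorem conj_prod_map_eq_map_prod {B ι : Type*} [Monoid B] (q : B →* G) (a : G) (s : ι → G)
    (g : ι → B) (L : List ι) (hg : ∀ i ∈ L, q (g i) = a * s i * a⁻¹) :
    a * (L.map s).prod * a⁻¹ = q (L.map g).prod := by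
  rw [map_list_prod, List.map_map, ← MulAut.conj_apply, map_list_prod, List.map_map]
  exact congrArg List.prod (List.map_congr_left fun i hi => (hg i hi).symm)

theorem exists_word_of_conj_decomposition [DecidableEq G] {B ι : Type*} [CommGroup B]
    (q : B →* G) {c : G} {n : ℕ} (hc : c ^ n = 1) (A : Finset ι) (k : ι → ℕ)
    (hk : ∀ i ∈ A, k i < n) (s : ι → G) (g : ι → B)
    (hg : ∀ i ∈ A, q (g i) = c ^ k i * s i * (c ^ k i)⁻¹) :
    ∃ l : List G, (∀ x ∈ l, x = c ∨ ∃ i ∈ A, s i = x) ∧ l.length = A.card + n ∧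
      l.countP (· ≠ c) ≤ A.card ∧ l.prod = q (∏ i ∈ A, g i) := by
  have hmaps : ∀ i ∈ A, k i ∈ Finset.range n := fun i hi => Finset.mem_range.2 (hk i hi)
  set fiber : ℕ → Finset ι := fun r => A.filter (k · = r)
  refine ⟨((List.range n).map fun r => (fiber r).toList.map s ++ [c]).flatten, ?_, ?_, ?_, ?_⟩
  · intro x hx
    obtain ⟨_, hseg, hx⟩ := List.mem_flatten.1 hx
    obtain ⟨r, -, rfl⟩ := List.mem_map.1 hseg
    rcases List.mem_append.1 hx with hx | hx
    · obtain ⟨i, hi, rfl⟩ := List.mem_map.1 hx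
      exact Or.inr ⟨i, (Finset.mem_filter.1 (Finset.mem_toList.1 hi)).1, rfl⟩
    · exact Or.inl (List.mem_singleton.1 hx)
  · simp only [List.length_flatten, List.map_map, Function.comp_def, List.length_append,
      List.length_map, Finset.length_toList, List.length_singleton, List.sum_map_range,
      Finset.sum_add_distrib, Finset.sum_const, Finset.card_range, smul_eq_mul, mul_one]
    rw [← Finset.card_eq_sum_card_fiberwise hmaps]
  · calc _ ≤ ∑ r ∈ Finset.range n, (fiber r).card := by
          rw [List.countP_flatten, List.map_map, List.sum_map_range]
          refine Finset.sum_le_sum fun r _ => ?_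
          calc _ = ((fiber r).toList.map s).countP (· ≠ c) := by simp [List.countP_append]
            _ ≤ _ := List.countP_le_length
            _ = (fiber r).card := by simp
      _ = A.card := (Finset.card_eq_sum_card_fiberwise hmaps).symm
  · have hfiber (r : ℕ) : c ^ r * ((fiber r).toList.map s).prod * (c ^ r)⁻¹ =
        q (∏ i ∈ fiber r, g i) := by
      rw [← Finset.prod_map_toList]
      refine conj_prod_map_eq_map_prod q _ s g _ fun i hi => ?_
      obtain ⟨hiA, rfl⟩ := Finset.mem_filter.1 (Finset.mem_toList.1 hi)
      exact hg i hiA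
    rw [prod_flatten_map_append_singleton, hc, mul_one, List.map_congr_left fun r _ => hfiber r,
      ← Function.comp_def q, ← List.map_map, ← map_list_prod, List.prod_map_range,
      Finset.prod_fiberwise_of_maps_to hmaps]

end Words

theorem Subgroup.exists_mul_zpow_eq_of_mem_closure {G : Type*} [Group G] {N : Subgroup G}
    {c : G} (hc : c ∈ normalizer (N : Set G)) {S : Set G} (hS : S ⊆ N) {g : G}
    (hg : g ∈ closure ({c} ∪ S)) : ∃ n ∈ N, ∃ j : ℤ, n * c ^ j = g := by
  have hsup : g ∈ N ⊔ zpowers c := (closure_le _).2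
    (Set.union_subset (Set.singleton_subset_iff.2 (mem_sup_right (mem_zpowers c)))
      (hS.trans fun _ hx => mem_sup_left hx)) hg
  rw [← SetLike.mem_coe, coe_mul_of_right_le_normalizer_left N _ ((zpowers_le).2 hc)] at hsup
  obtain ⟨n, hn, _, ⟨j, rfl⟩, rfl⟩ := hsup
  exact ⟨n, hn, j, rfl⟩

theorem exists_finset_sum_sub_mem_of_mem_span {ι M : Type*} [AddCommGroup M]
    [Module (ZMod 2) M] [FiniteDimensional (ZMod 2) M] (K : Submodule (ZMod 2) M) (τ : ι → M)
    {t : M} (ht : t ∈ Submodule.span (ZMod 2) (Set.range τ)) :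
    ∃ A : Finset ι, A.card ≤ finrank (ZMod 2) (M ⧸ K) ∧ t - ∑ i ∈ A, τ i ∈ K := by
  obtain ⟨κ, a, ha, hspan, hli⟩ := exists_linearIndependent' (ZMod 2) (K.mkQ ∘ τ)
  have hπt : K.mkQ t ∈ Submodule.span (ZMod 2) (Set.range (K.mkQ ∘ τ ∘ a)) := by
    rw [← Function.comp_assoc, hspan, Set.range_comp, ← Submodule.map_span]
    exact Submodule.mem_map_of_mem ht
  obtain ⟨f, hf⟩ := Finsupp.mem_span_range_iff_exists_finsupp.1 hπt
  refine ⟨f.support.map ⟨a, ha⟩, ?_, ?_⟩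
  · rw [Finset.card_map, ← Fintype.card_coe]
    exact (hli.comp ((↑) : f.support → κ) Subtype.val_injective).fintype_card_le_finrank
  · rw [← Submodule.Quotient.eq, ← Submodule.mkQ_apply, ← Submodule.mkQ_apply, ← hf, map_sum,
      Finset.sum_map, Finsupp.sum]
    refine Finset.sum_congr rfl fun i hi => ?_
    rw [(by decide : ∀ r : ZMod 2, r ≠ 0 → r = 1) _ (Finsupp.mem_support_iff.1 hi), one_smul]
    rfl

namespace WreathQuot

variable (p : ℕ)

def baseHom : WreathBase p →* WreathQuot p :=
  (QuotientGroup.mk' _).comp (inl (φ := wreathShift p))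

theorem Vsub_eq_range_baseHom : Vsub p = (baseHom p).range :=
  MonoidHom.map_range _ _

theorem center_le_ker_rightHom :
    Subgroup.center (Wreath p) ≤ (rightHom : Wreath p →* Multiplicative (ZMod p)).ker := by
  intro g hg
  set δ : ZMod p → ZMod 2 := Pi.single 0 1
  have hcomm := congrArg left (Subgroup.mem_center_iff.1 hg (inl (ofAdd δ)))
  simp only [mul_left, left_inl, right_inl, map_one, MulAut.one_apply] at hcomm
  -- centrality makes the shift by `g.right` fix `δ`, and only the trivial shift does
  have hfix : δ (0 + toAdd g.right) = δ 0 :=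
    congrFun (congrArg toAdd (mul_left_cancel (hcomm.symm.trans (mul_comm _ _)))) 0
  have hright : toAdd g.right = 0 := by simpa [δ, Pi.single_apply, eq_comm] using hfix
  exact hright

theorem mk_inr_mem_Vsub_iff (k : Multiplicative (ZMod p)) :
    QuotientGroup.mk (s := Subgroup.center (Wreath p)) (inr k) ∈ Vsub p ↔ k = 1 := by
  refine ⟨?_, fun hk => hk ▸ by simp⟩
  rintro ⟨_, ⟨b, rfl⟩, h⟩
  have := center_le_ker_rightHom p (QuotientGroup.eq.1 h)
  simpa [MonoidHom.mem_ker] using this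

theorem cElem_zpow (j : ℤ) :
    cElem p ^ j = QuotientGroup.mk (inr (φ := wreathShift p) (ofAdd (j : ZMod p))) := by
  rw [cElem, ← map_zpow, ← map_zpow, ← ofAdd_zsmul, zsmul_one]
  rfl

theorem cElem_pow_card : cElem p ^ p = 1 := by
  simpa using cElem_zpow p p

theorem eq_one_of_cElem_zpow_mem_Vsub {j : ℤ} (h : cElem p ^ j ∈ Vsub p) : cElem p ^ j = 1 := by
  rw [cElem_zpow, mk_inr_mem_Vsub_iff] at h
  rw [cElem_zpow, h]
  rfl

theorem cElem_not_mem_Vsub [Fact (1 < p)] : cElem p ∉ Vsub p := by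
  rw [← zpow_one (cElem p), cElem_zpow, mk_inr_mem_Vsub_iff]
  simp

theorem cElem_zpow_conj_baseHom (j : ℤ) (u : WreathBase p) :
    cElem p ^ j * baseHom p u * (cElem p ^ j)⁻¹ =
      baseHom p (ofAdd (shiftAddAut p j (toAdd u))) := by
  rw [cElem_zpow, baseHom, MonoidHom.comp_apply, ← QuotientGroup.mk_inv, QuotientGroup.mk'_apply,
    ← QuotientGroup.mk_mul, ← QuotientGroup.mk_mul, ← map_inv, ← inl_aut]
  rfl

theorem baseHom_eq_one_of_mem_span_one {u : ZMod p → ZMod 2}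
    (hu : u ∈ Submodule.span (ZMod 2) {(1 : ZMod p → ZMod 2)}) : baseHom p (ofAdd u) = 1 := by
  obtain ⟨r, rfl⟩ := Submodule.mem_span_singleton.1 hu
  have hcentral :
      inl (φ := wreathShift p) (ofAdd (1 : ZMod p → ZMod 2)) ∈ Subgroup.center (Wreath p) := by
    refine Subgroup.mem_center_iff.2 fun g => ?_
    ext : 1
    · show g.left * wreathShift p g.right (ofAdd 1) = ofAdd 1 * wreathShift p 1 g.left
      rw [(wreathShift p).map_one, MulAut.one_apply, mul_comm]
      rfl
    · simp
  rcases (by decide : ∀ r : ZMod 2, r = 0 ∨ r = 1) r with rfl | rfl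
  · simp
  · rw [one_smul]
    exact (QuotientGroup.eq_one_iff _).2 hcentral

theorem finrank_quotient_span_one [NeZero p] :
    finrank (ZMod 2) ((ZMod p → ZMod 2) ⧸ Submodule.span (ZMod 2) {(1 : ZMod p → ZMod 2)}) =
      p - 1 := by
  have := Submodule.finrank_quotient_add_finrank (Submodule.span (ZMod 2) {(1 : ZMod p → ZMod 2)})
  rw [finrank_span_singleton one_ne_zero, Module.finrank_fintype_fun_eq_card, ZMod.card] at this
  omega

variable {p}

theorem exists_mem_span_shifts_of_mem_Vsub {S : Set (WreathQuot p)} (u : S → WreathBase p)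
    (hu : ∀ s, baseHom p (u s) = s) (hgen : Subgroup.closure ({cElem p} ∪ S) = ⊤)
    {v : WreathQuot p} (hv : v ∈ Vsub p) :
    ∃ t ∈ Submodule.span (ZMod 2)
        (Set.range fun i : ZMod p × S => shiftAddAut p i.1 (toAdd (u i.2))),
      baseHom p (ofAdd t) = v := by
  set L := Submodule.span (ZMod 2)
    (Set.range fun i : ZMod p × S => shiftAddAut p i.1 (toAdd (u i.2)))
  have hshift (j : ZMod p) {t : ZMod p → ZMod 2} (ht : t ∈ L) : shiftAddAut p j t ∈ L := by
    induction ht using Submodule.span_induction with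
    | mem x hx =>
      obtain ⟨⟨k, s⟩, rfl⟩ := hx
      exact Submodule.subset_span ⟨(j + k, s), funext fun i => by simp [shiftAddAut, add_assoc]⟩
    | zero => simp
    | add x y _ _ hx hy => simpa using add_mem hx hy
    | smul r x _ hx => exact L.smul_mem r hx
  set N := (AddSubgroup.toSubgroup L.toAddSubgroup).map (baseHom p)
  have hmemN {t : ZMod p → ZMod 2} (ht : t ∈ L) : baseHom p (ofAdd t) ∈ N := ⟨ofAdd t, ht, rfl⟩
  have hcN : cElem p ∈ Subgroup.normalizer (N : Set (WreathQuot p)) := by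
    refine Subgroup.mem_normalizer_iff.2 fun h => ⟨?_, ?_⟩
    · rintro ⟨t, ht, rfl⟩
      rw [← zpow_one (cElem p), cElem_zpow_conj_baseHom]
      exact hmemN (hshift _ ht)
    · rintro ⟨t, ht, hconj⟩
      have hh : h = cElem p ^ (-1 : ℤ) * baseHom p t * (cElem p ^ (-1 : ℤ))⁻¹ := by
        rw [hconj]
        group
      rw [hh, cElem_zpow_conj_baseHom]
      exact hmemN (hshift _ ht)
  have hSN : S ⊆ N := fun s hs => by
    rw [SetLike.mem_coe, ← Subtype.coe_mk s hs, ← hu]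
    exact hmemN (Submodule.subset_span ⟨(0, ⟨s, hs⟩), funext fun i => congrArg _ (add_zero i)⟩)
  obtain ⟨n, hn, j, rfl⟩ :=
    Subgroup.exists_mul_zpow_eq_of_mem_closure hcN hSN (hgen ▸ Subgroup.mem_top v)
  have hnV : n ∈ Vsub p := Vsub_eq_range_baseHom p ▸ Subgroup.map_le_range _ _ hn
  have hcj : cElem p ^ j = 1 :=
    eq_one_of_cElem_zpow_mem_Vsub p (by simpa using mul_mem (inv_mem hnV) hv)
  obtain ⟨t, ht, rfl⟩ := hn
  exact ⟨t, ht, by rw [hcj, mul_one]; rfl⟩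

end WreathQuot

open WreathQuot in
open scoped Classical in
theorem short_words_for_V_general (p : ℕ) (hp : p.Prime)
    (S : Set (WreathQuot p)) (hS : S ⊆ Vsub p)
    (hgen : Subgroup.closure ({cElem p} ∪ S) = ⊤) :
    ∀ v ∈ Vsub p, ∃ l : List (WreathQuot p),
      (∀ x ∈ l, x = cElem p ∨ x = (cElem p)⁻¹ ∨ x ∈ S ∨ x⁻¹ ∈ S) ∧
      l.length ≤ 3 * (p - 1) ∧
      l.countP (fun x => decide (x ∈ S ∨ x⁻¹ ∈ S)) ≤ p - 1 ∧
      l.prod = v := by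
  intro v hv
  have : Fact (1 < p) := ⟨hp.one_lt⟩
  choose u hu using fun s : S => MonoidHom.mem_range.1 (Vsub_eq_range_baseHom p ▸ hS s.2)
  obtain ⟨t, ht, rfl⟩ := exists_mem_span_shifts_of_mem_Vsub u hu hgen hv
  obtain ⟨A, hA, hK⟩ :=
    exists_finset_sum_sub_mem_of_mem_span (Submodule.span (ZMod 2) {(1 : ZMod p → ZMod 2)}) _ ht
  rw [finrank_quotient_span_one] at hA
  have hconj (i : ZMod p × S) : baseHom p (ofAdd (shiftAddAut p i.1 (toAdd (u i.2)))) =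
      cElem p ^ i.1.val * i.2 * (cElem p ^ i.1.val)⁻¹ := by
    rw [← hu, ← zpow_natCast, cElem_zpow_conj_baseHom, Int.cast_natCast, ZMod.natCast_zmod_val]
  obtain ⟨l, hmem, hlen, hcount, hprod⟩ := exists_word_of_conj_decomposition (baseHom p)
    (cElem_pow_card p) A (fun i => i.1.val) (fun i _ => ZMod.val_lt i.1) (fun i => i.2) _
    fun i _ => hconj i
  have hne (x : WreathQuot p) (hx : x ∈ S ∨ x⁻¹ ∈ S) : x ≠ cElem p := by
    rintro rfl
    exact cElem_not_mem_Vsub p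
      (hx.elim (fun h => hS h) fun h => inv_inv (cElem p) ▸ inv_mem (hS h))
  refine ⟨l, fun x hx => ?_, ?_, ?_, ?_⟩
  · rcases hmem x hx with rfl | ⟨i, -, rfl⟩
    exacts [Or.inl rfl, Or.inr (Or.inr (Or.inl i.2.2))]
  · have := hp.two_le
    omega
  · refine (List.countP_mono_left fun x _ hx => ?_).trans (hcount.trans hA)
    simpa using hne x (by simpa using hx)
  · rw [hprod, ← ofAdd_sum, ← div_eq_one, ← map_div, ← ofAdd_sub]
    exact baseHom_eq_one_of_mem_span_one p (by simpa using Submodule.neg_mem _ hK)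

open scoped Classical in
/-- For an odd prime `p` and `G = (C₂ ≀ C_p)/Z = V ⋊ ⟨c⟩`: if
`X = {c} ∪ S` with `S ⊆ V` generates `G`, then every `v ∈ V` is a word of
length at most `3(p-1)` in `X` (inverses allowed) in which the elements of
`S` occur at most `p - 1` times in total. -/
theorem short_words_for_V (p : ℕ) (hp : p.Prime) (hodd : Odd p)
    (S : Set (WreathQuot p)) (hS : S ⊆ Vsub p)
    (hgen : Subgroup.closure ({cElem p} ∪ S) = ⊤) :
    ∀ v ∈ Vsub p, ∃ l : List (WreathQuot p),
      (∀ x ∈ l, x = cElem p ∨ x = (cElem p)⁻¹ ∨ x ∈ S ∨ x⁻¹ ∈ S) ∧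
      l.length ≤ 3 * (p - 1) ∧
      l.countP (fun x => decide (x ∈ S ∨ x⁻¹ ∈ S)) ≤ p - 1 ∧
      l.prod = v :=
  short_words_for_V_general p hp S hS hgen
end

section
/- Let p be an odd prime and G = (C₂ ≀ C_p)/Z(C₂ ≀ C_p). Then for every generating set X of G, the diameter of the Cayley graph Cay(G,X) is at most (13/2)(p−1). -/
/-!
Modulo the centre, the base group of `C₂ ≀ C_p` becomes `E = 𝔽₂^(ℤ/p) / constants`, of
dimension `p - 1`, on which the top group acts by cyclic shifts. Pick `a ∈ X` rotating by
`k ≠ 0`. The conjugates `a^l ⁅x, y⁆ a^(-l)` (`x, y ∈ X`, `l < p`) together with the constants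
span a shift-invariant subspace, hence a normal subgroup `N`; modulo `N` the generators commute,
so `N` contains every `⁅a, v⁆ = (σ_k - 1) v`, and for odd `p` the map `σ_k - 1` is onto `E`.
So every `g` is `a^n` (with `p ≤ n < 2p`, fixed by the rotation of `g`) times a sum of at most
`p - 1` such conjugates. Grouping them by `l` writes `g` as `B₀ a B₁ a ⋯ B_(n-1) a`, each `B_l`
a product of commutators of generators, a word of length at most `n + 4(p - 1) ≤ 6p - 5`.
-/

open Submodule SemidirectProduct
open scoped commutatorElement

section WordBall

variable {G : Type*} [Group G]

def wordBall (X : Set G) (n : ℕ) : Set G :=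
  {g | ∃ l : List G, (∀ x ∈ l, x ∈ X ∨ x⁻¹ ∈ X) ∧ l.length ≤ n ∧ l.prod = g}

variable {X : Set G} {m n : ℕ} {g h : G}

lemma one_mem_wordBall : (1 : G) ∈ wordBall X n :=
  ⟨[], by simp, by simp, rfl⟩

lemma mem_wordBall_one (hg : g ∈ X) : g ∈ wordBall X 1 :=
  ⟨[g], by simp [hg], by simp, by simp⟩

lemma inv_mem_wordBall (hg : g ∈ wordBall X n) : g⁻¹ ∈ wordBall X n := by
  obtain ⟨l, hl, hlen, rfl⟩ := hg
  refine ⟨(l.map (·⁻¹)).reverse, ?_, by simpa using hlen, (List.prod_inv_reverse l).symm⟩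
  simp only [List.mem_reverse, List.mem_map]
  rintro _ ⟨x, hx, rfl⟩
  simpa [or_comm] using hl x hx

lemma mul_mem_wordBall (hg : g ∈ wordBall X m) (hh : h ∈ wordBall X n) :
    g * h ∈ wordBall X (m + n) := by
  obtain ⟨l, hl, hlen, rfl⟩ := hg
  obtain ⟨l', hl', hlen', rfl⟩ := hh
  refine ⟨l ++ l', ?_, by simp; omega, List.prod_append⟩
  simpa only [List.mem_append] using fun x hx => hx.elim (hl x) (hl' x)

lemma commutatorElement_mem_wordBall (hg : g ∈ X) (hh : h ∈ X) : ⁅g, h⁆ ∈ wordBall X 4 :=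
  mul_mem_wordBall (mul_mem_wordBall (mul_mem_wordBall (mem_wordBall_one hg)
    (mem_wordBall_one hh)) (inv_mem_wordBall (mem_wordBall_one hg)))
    (inv_mem_wordBall (mem_wordBall_one hh))

end WordBall

lemma commutatorElement_mem_of_closure_eq_top {G : Type*} [Group G] {X : Set G}
    (hX : Subgroup.closure X = ⊤) {N : Subgroup G} [N.Normal]
    (hN : ∀ x ∈ X, ∀ y ∈ X, ⁅x, y⁆ ∈ N) (g h : G) : ⁅g, h⁆ ∈ N := by
  let φ := QuotientGroup.mk' N
  have hcomm : ∀ x ∈ φ '' X, ∀ y ∈ φ '' X, x * y = y * x := by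
    rintro _ ⟨x, hx, rfl⟩ _ ⟨y, hy, rfl⟩
    rw [← commute_iff_eq, ← commutatorElement_eq_one_iff_commute, ← map_commutatorElement]
    exact (QuotientGroup.eq_one_iff _).2 (hN x hx y hy)
  have htop : Subgroup.closure (φ '' X) = ⊤ := by
    rw [← MonoidHom.map_closure, hX,
      Subgroup.map_top_of_surjective _ (QuotientGroup.mk'_surjective N)]
  have hab := Subgroup.isMulCommutative_closure hcomm
  rw [htop] at hab
  have key : φ g * φ h = φ h * φ g := congrArg Subtype.val
    (hab.is_comm.comm (⟨φ g, trivial⟩ : (⊤ : Subgroup (G ⧸ N))) ⟨φ h, trivial⟩)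
  rw [← QuotientGroup.eq_one_iff, ← QuotientGroup.mk'_apply, map_commutatorElement,
    commutatorElement_eq_one_iff_commute]
  exact key

lemma exists_finset_card_le_finrank_sum_eq {ι E : Type*} [AddCommGroup E] [Module (ZMod 2) E]
    [FiniteDimensional (ZMod 2) E] {v : ι → E} (hv : span (ZMod 2) (Set.range v) = ⊤) (w : E) :
    ∃ s : Finset ι, s.card ≤ Module.finrank (ZMod 2) E ∧ ∑ i ∈ s, v i = w := by
  classical
  obtain ⟨κ, a, ha, hspan, hli⟩ := exists_linearIndependent' (ZMod 2) v
  obtain ⟨b, hb⟩ : ∃ b : Module.Basis κ (ZMod 2) E, ∀ j, b j = v (a j) :=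
    ⟨.mk hli (by rw [hspan, hv]), fun j => Module.Basis.mk_apply ..⟩
  have : Fintype κ := FiniteDimensional.fintypeBasisIndex b
  refine ⟨(Finset.univ.filter fun j => b.repr w j = 1).map ⟨a, ha⟩, ?_, ?_⟩
  · rw [Finset.card_map, Module.finrank_eq_card_basis b]
    exact Finset.card_filter_le _ _
  · conv_rhs => rw [← b.sum_repr w]
    rw [Finset.sum_map, Finset.sum_filter]
    refine Finset.sum_congr rfl fun j _ => ?_
    have : ∀ c : ZMod 2, c = 0 ∨ c = 1 := by decide
    rcases this (b.repr w j) with h | h <;> simp [h, hb]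

namespace WreathQuot

variable {p : ℕ}

def shift (p : ℕ) (h : ZMod p) : (ZMod p → ZMod 2) →ₗ[ZMod 2] (ZMod p → ZMod 2) :=
  LinearMap.funLeft (ZMod 2) (ZMod 2) (· + h)

@[simp] lemma shift_apply (h : ZMod p) (f : ZMod p → ZMod 2) (i : ZMod p) :
    shift p h f i = f (i + h) := rfl

@[simp] lemma shift_zero (f : ZMod p → ZMod 2) : shift p 0 f = f := by
  funext i; simp

@[simp] lemma shift_one (h : ZMod p) : shift p h 1 = 1 := rfl

lemma shift_shift (h h' : ZMod p) (f : ZMod p → ZMod 2) :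
    shift p h (shift p h' f) = shift p (h + h') f := by
  funext i; simp [add_assoc]

def constants (p : ℕ) : Submodule (ZMod 2) (ZMod p → ZMod 2) :=
  span (ZMod 2) {1}

lemma mem_constants_iff {f : ZMod p → ZMod 2} :
    f ∈ constants p ↔ ∃ c : ZMod 2, f = fun _ => c := by
  simp only [constants, mem_span_singleton, funext_iff]
  exact ⟨fun ⟨c, hc⟩ => ⟨c, fun i => by simp [← hc]⟩,
    fun ⟨c, hc⟩ => ⟨c, fun i => by simp [hc]⟩⟩

def shiftSubQuot (k : ZMod p) :
    ((ZMod p → ZMod 2) ⧸ constants p) →ₗ[ZMod 2] ((ZMod p → ZMod 2) ⧸ constants p) :=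
  (constants p).mapQ (constants p) (shift p k - LinearMap.id) fun f hf => by
    obtain ⟨c, rfl⟩ := mem_span_singleton.1 hf
    simp

section Prime

variable [Fact p.Prime] {k : ZMod p}

lemma mem_constants_of_shift_eq (hk : k ≠ 0) {f : ZMod p → ZMod 2} (hf : shift p k f = f) :
    f ∈ constants p := by
  have hmul : ∀ n : ℕ, f (n * k) = f 0 := by
    intro n
    induction n with
    | zero => simp
    | succ n ih => rw [Nat.cast_succ, add_one_mul, ← ih]; exact congrFun hf _
  refine mem_constants_iff.2 ⟨f 0, funext fun i => ?_⟩
  simpa [mul_assoc, inv_mul_cancel₀ hk] using hmul (i * k⁻¹).val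

-- Summing `f (i + k) - f i = c` over all `i` gives `p • c = 0`, so `c = 0` as `p` is odd.
lemma mem_constants_of_shift_sub_mem (hodd : Odd p) (hk : k ≠ 0) {f : ZMod p → ZMod 2}
    (hf : shift p k f - f ∈ constants p) : f ∈ constants p := by
  obtain ⟨c, hc⟩ := mem_constants_iff.1 hf
  have hsum : ∑ i, (shift p k f - f) i = 0 := by
    simp only [Pi.sub_apply, shift_apply, Finset.sum_sub_distrib, sub_eq_zero]
    exact Fintype.sum_equiv (Equiv.addRight k) _ _ fun _ => rfl
  rw [hc, Finset.sum_const, Finset.card_univ, ZMod.card, nsmul_eq_mul, hodd.natCast_zmod_two,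
    one_mul] at hsum
  refine mem_constants_of_shift_eq hk (sub_eq_zero.1 ?_)
  rw [hc, hsum]; rfl

lemma exists_sub_shift_sub_mem (hodd : Odd p) (hk : k ≠ 0) (w : ZMod p → ZMod 2) :
    ∃ f, w - (shift p k f - f) ∈ constants p := by
  have hinj : Function.Injective (shiftSubQuot k) := by
    rw [← LinearMap.ker_eq_bot, eq_bot_iff]
    intro e he
    induction e using Submodule.Quotient.induction_on with
    | H f =>
      rw [LinearMap.mem_ker] at he
      rw [mem_bot, Submodule.Quotient.mk_eq_zero]
      exact mem_constants_of_shift_sub_mem hodd hk ((Submodule.Quotient.mk_eq_zero _).1 he)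
  obtain ⟨e, he⟩ := LinearMap.injective_iff_surjective.1 hinj (Submodule.Quotient.mk w)
  induction e using Submodule.Quotient.induction_on with
  | H f => exact ⟨f, (Submodule.Quotient.eq _).1 he.symm⟩

lemma finrank_quotient_constants :
    Module.finrank (ZMod 2) ((ZMod p → ZMod 2) ⧸ constants p) = p - 1 := by
  have h := (constants p).finrank_quotient_add_finrank
  rw [Module.finrank_fintype_fun_eq_card, ZMod.card,
    show Module.finrank (ZMod 2) (constants p) = 1 from finrank_span_singleton one_ne_zero] at h
  omega

lemma exists_nsmul_eq (hk : k ≠ 0) (h : ZMod p) :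
    ∃ n, p ≤ n ∧ n < 2 * p ∧ n • k = h := by
  have := ZMod.val_lt (h * k⁻¹)
  refine ⟨p + (h * k⁻¹).val, by omega, by omega, ?_⟩
  simp [nsmul_eq_mul, mul_assoc, inv_mul_cancel₀ hk]

end Prime

lemma right_eq_one_of_mem_center {z : Wreath p} (hz : z ∈ Subgroup.center (Wreath p)) :
    z.right = 1 := by
  have h := congrArg left ((Subgroup.mem_center_iff.1 hz) (inl (.ofAdd (Pi.single 0 1))))
  simp only [mul_left, left_inl, right_inl, map_one, MulAut.one_apply, mul_comm z.left,
    mul_left_inj] at h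
  have h0 := congrFun (congrArg Multiplicative.toAdd h) (-z.right.toAdd)
  by_contra hne
  have : -z.right.toAdd ≠ 0 := by simpa [neg_eq_zero] using hne
  simp [wreathShift, shiftAddAut, Pi.single_apply, this] at h0

lemma inl_mem_center_iff {f : ZMod p → ZMod 2} :
    inl (.ofAdd f) ∈ Subgroup.center (Wreath p) ↔ f ∈ constants p := by
  rw [mem_constants_iff, Subgroup.mem_center_iff]
  constructor
  · intro hf
    refine ⟨f 0, funext fun i => ?_⟩
    have h := congrArg left (hf (inr (.ofAdd i)))
    simp only [mul_left, left_inl, right_inl, left_inr, right_inr, map_one, mul_one,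
      one_mul] at h
    simpa [wreathShift, shiftAddAut] using congrFun (congrArg Multiplicative.toAdd h) 0
  · rintro ⟨c, rfl⟩ w
    ext
    · simp only [mul_left, left_inl, right_inl, map_one, MulAut.one_apply, mul_comm w.left]
      rfl
    · simp

def emb (f : ZMod p → ZMod 2) : WreathQuot p := (inl (.ofAdd f) : Wreath p)

lemma emb_add (f g : ZMod p → ZMod 2) : emb (f + g) = emb f * emb g := by
  simp [emb, ofAdd_add]

lemma emb_neg (f : ZMod p → ZMod 2) : emb (-f) = (emb f)⁻¹ := by
  simp [emb, ofAdd_neg]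

lemma emb_sub (f g : ZMod p → ZMod 2) : emb (f - g) = emb f * (emb g)⁻¹ := by
  rw [sub_eq_add_neg, emb_add, emb_neg]

@[simp] lemma emb_zero : emb (0 : ZMod p → ZMod 2) = 1 := by
  simp [emb]

lemma emb_eq_one_iff {f : ZMod p → ZMod 2} : emb f = 1 ↔ f ∈ constants p :=
  (QuotientGroup.eq_one_iff _).trans inl_mem_center_iff

lemma emb_eq_emb_iff {f g : ZMod p → ZMod 2} : emb f = emb g ↔ f - g ∈ constants p := by
  rw [← emb_eq_one_iff, emb_sub, mul_inv_eq_one]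

def rotPart (p : ℕ) : WreathQuot p →* Multiplicative (ZMod p) :=
  QuotientGroup.lift _ (rightHom) fun _ hz => right_eq_one_of_mem_center hz

lemma exists_emb_eq_of_rotPart_eq_one {q : WreathQuot p} (hq : rotPart p q = 1) :
    ∃ f, emb f = q := by
  induction q using QuotientGroup.induction_on with
  | H w =>
    refine ⟨w.left.toAdd, congrArg (fun w : Wreath p => (w : WreathQuot p)) ?_⟩
    ext
    · rfl
    · exact hq.symm

lemma mul_emb (q : WreathQuot p) (f : ZMod p → ZMod 2) :
    q * emb f = emb (shift p (rotPart p q).toAdd f) * q := by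
  induction q using QuotientGroup.induction_on with
  | H w =>
    refine congrArg (fun w : Wreath p => (w : WreathQuot p)) ?_
    ext
    · simp only [mul_left, left_inl, right_inl, map_one, MulAut.one_apply, mul_comm w.left]
      rfl
    · simp

lemma commutatorElement_emb (q : WreathQuot p) (f : ZMod p → ZMod 2) :
    ⁅q, emb f⁆ = emb (shift p (rotPart p q).toAdd f - f) := by
  rw [commutatorElement_def, mul_emb, mul_inv_cancel_right, emb_sub]

lemma exists_emb_eq_commutatorElement (x y : WreathQuot p) : ∃ f, emb f = ⁅x, y⁆ :=
  exists_emb_eq_of_rotPart_eq_one <| by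
    rw [map_commutatorElement, commutatorElement_eq_one_iff_commute]
    exact Commute.all _ _

lemma exists_mem_toAdd_rotPart_ne_zero [Fact p.Prime] {X : Set (WreathQuot p)}
    (hgen : Subgroup.closure X = ⊤) : ∃ a ∈ X, (rotPart p a).toAdd ≠ 0 := by
  by_contra! h
  have hker : Subgroup.closure X ≤ (rotPart p).ker :=
    (Subgroup.closure_le _).2 fun x hx =>
      MonoidHom.mem_ker.2 (congrArg Multiplicative.ofAdd (h x hx))
  rw [hgen] at hker
  exact one_ne_zero
    (congrArg Multiplicative.toAdd (hker (Subgroup.mem_top (cElem p))) : (1 : ZMod p) = 0)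


def embSubgroup (M : Submodule (ZMod 2) (ZMod p → ZMod 2)) : Subgroup (WreathQuot p) where
  carrier := emb '' M
  mul_mem' := by
    rintro _ _ ⟨f, hf, rfl⟩ ⟨g, hg, rfl⟩
    exact ⟨f + g, M.add_mem hf hg, emb_add f g⟩
  one_mem' := ⟨0, M.zero_mem, emb_zero⟩
  inv_mem' := by
    rintro _ ⟨f, hf, rfl⟩
    exact ⟨-f, M.neg_mem hf, emb_neg f⟩

lemma emb_mem_embSubgroup_iff {M : Submodule (ZMod 2) (ZMod p → ZMod 2)}
    (hM : constants p ≤ M) {f : ZMod p → ZMod 2} : emb f ∈ embSubgroup M ↔ f ∈ M := by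
  refine ⟨fun ⟨g, hg, he⟩ => ?_, fun hf => ⟨f, hf, rfl⟩⟩
  simpa using M.sub_mem hg (hM (emb_eq_emb_iff.1 he))

lemma embSubgroup_normal {M : Submodule (ZMod 2) (ZMod p → ZMod 2)}
    (hM : ∀ h, ∀ f ∈ M, shift p h f ∈ M) : (embSubgroup M).Normal :=
  ⟨by
    rintro _ ⟨f, hf, rfl⟩ q
    exact ⟨_, hM _ f hf, by rw [mul_emb, mul_inv_cancel_right]⟩⟩

section Atoms

variable (X : Set (WreathQuot p)) (d : WreathQuot p → WreathQuot p → ZMod p → ZMod 2)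
  (k : ZMod p)

-- When `a` rotates by `k` and `emb (d x y) = ⁅x, y⁆`, `emb (atom X d k (l, x, y))` is the
-- conjugate `a ^ l.val * ⁅x, y⁆ * (a ^ l.val)⁻¹`.
def atom (i : ZMod p × X × X) : ZMod p → ZMod 2 :=
  shift p (i.1 * k) (d i.2.1 i.2.2)

def atomSpan : Submodule (ZMod 2) (ZMod p → ZMod 2) :=
  span (ZMod 2) (Set.range (atom X d k)) ⊔ constants p

variable {X d k}

lemma shift_mem_atomSpan [Fact p.Prime] (hk : k ≠ 0) (h : ZMod p) {f : ZMod p → ZMod 2}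
    (hf : f ∈ atomSpan X d k) : shift p h f ∈ atomSpan X d k := by
  suffices atomSpan X d k ≤ (atomSpan X d k).comap (shift p h) from this hf
  refine sup_le (span_le.2 ?_) (le_trans (span_le.2 ?_) (comap_mono le_sup_right))
  · rintro _ ⟨⟨l, x, y⟩, rfl⟩
    refine mem_sup_left (subset_span ⟨(h * k⁻¹ + l, x, y), ?_⟩)
    simp [atom, shift_shift, add_mul, inv_mul_cancel_right₀ hk]
  · simp [constants]

lemma span_range_mkQ_atom_eq_top [Fact p.Prime] (hodd : Odd p) (hgen : Subgroup.closure X = ⊤)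
    {a : WreathQuot p} (hk : (rotPart p a).toAdd ≠ 0)
    (hd : ∀ x y, emb (d x y) = ⁅x, y⁆) :
    span (ZMod 2) (Set.range ((constants p).mkQ ∘ atom X d (rotPart p a).toAdd)) = ⊤ := by
  set k := (rotPart p a).toAdd
  have hC : constants p ≤ atomSpan X d k := le_sup_right
  have : (embSubgroup (atomSpan X d k)).Normal :=
    embSubgroup_normal fun h _ hf => shift_mem_atomSpan hk h hf
  have hXN : ∀ x ∈ X, ∀ y ∈ X, ⁅x, y⁆ ∈ embSubgroup (atomSpan X d k) := by
    intro x hx y hy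
    rw [← hd, emb_mem_embSubgroup_iff hC]
    exact mem_sup_left (subset_span ⟨(0, ⟨x, hx⟩, ⟨y, hy⟩), by simp [atom]⟩)
  have hdiff : ∀ f, shift p k f - f ∈ atomSpan X d k := fun f => by
    rw [← emb_mem_embSubgroup_iff hC, ← commutatorElement_emb]
    exact commutatorElement_mem_of_closure_eq_top hgen hXN a (emb f)
  have htop : atomSpan X d k = ⊤ := eq_top_iff'.2 fun w => by
    obtain ⟨f, hf⟩ := exists_sub_shift_sub_mem hodd hk w
    simpa using add_mem (hC hf) (hdiff f)
  rw [Set.range_comp, span_image, map_mkQ_eq_top, sup_comm]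
  exact htop

end Atoms

lemma emb_sum_mem_wordBall {ι : Type*} {X : Set (WreathQuot p)} {m : ℕ} (s : Finset ι)
    (f : ι → ZMod p → ZMod 2) (hf : ∀ i ∈ s, emb (f i) ∈ wordBall X m) :
    emb (∑ i ∈ s, f i) ∈ wordBall X (m * s.card) := by
  classical
  induction s using Finset.induction_on with
  | empty => simpa using one_mem_wordBall
  | insert j s hj ih =>
    rw [Finset.sum_insert hj, emb_add, Finset.card_insert_of_notMem hj, mul_add_one, add_comm]
    exact mul_mem_wordBall (hf j (Finset.mem_insert_self j s))
      (ih fun i hi => hf i (Finset.mem_insert_of_mem hi))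

-- The left-hand side is the product of the word `B₀ a B₁ a ⋯ B_(n-1) a`, where `B_l = emb (v l)`.
lemma emb_sum_shift_mul_pow_mem_wordBall {X : Set (WreathQuot p)} {a : WreathQuot p}
    (ha : a ∈ X) {v : ℕ → ZMod p → ZMod 2} {m : ℕ → ℕ}
    (hv : ∀ l, emb (v l) ∈ wordBall X (m l)) (n : ℕ) :
    emb (∑ l ∈ Finset.range n, shift p (l • (rotPart p a).toAdd) (v l)) * a ^ n ∈
      wordBall X (n + ∑ l ∈ Finset.range n, m l) := by
  induction n with
  | zero => simpa using one_mem_wordBall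
  | succ n ih =>
    set S := ∑ l ∈ Finset.range n, shift p (l • (rotPart p a).toAdd) (v l)
    have hconj :
        emb (shift p (n • (rotPart p a).toAdd) (v n)) * a ^ n = a ^ n * emb (v n) := by
      rw [mul_emb, map_pow, toAdd_pow]
    have key : emb (S + shift p (n • (rotPart p a).toAdd) (v n)) * a ^ (n + 1) =
        emb S * a ^ n * emb (v n) * a := by
      rw [emb_add, pow_succ, mul_assoc (emb S), ← mul_assoc _ (a ^ n), hconj]
      simp only [mul_assoc]
    rw [Finset.sum_range_succ, Finset.sum_range_succ, key,
      show n + 1 + (∑ l ∈ Finset.range n, m l + m n) = n + ∑ l ∈ Finset.range n, m l + m n + 1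
        by ring]
    exact mul_mem_wordBall (mul_mem_wordBall ih (hv n)) (mem_wordBall_one ha)

lemma emb_sum_atom_mul_pow_mem_wordBall [NeZero p] {X : Set (WreathQuot p)}
    {a : WreathQuot p} (ha : a ∈ X) {d : WreathQuot p → WreathQuot p → ZMod p → ZMod 2}
    (hd : ∀ x y, emb (d x y) = ⁅x, y⁆) (s : Finset (ZMod p × X × X)) {n : ℕ} (hn : p ≤ n) :
    emb (∑ i ∈ s, atom X d (rotPart p a).toAdd i) * a ^ n ∈ wordBall X (n + 4 * s.card) := by
  classical
  set k := (rotPart p a).toAdd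
  have hmaps : ∀ i ∈ s, i.1.val ∈ Finset.range n :=
    fun i _ => Finset.mem_range.2 ((ZMod.val_lt i.1).trans_le hn)
  have hsum : ∑ i ∈ s, atom X d k i =
      ∑ l ∈ Finset.range n, shift p (l • k) (∑ i ∈ s with i.1.val = l, d i.2.1 i.2.2) := by
    rw [← Finset.sum_fiberwise_of_maps_to hmaps]
    refine Finset.sum_congr rfl fun l _ => ?_
    rw [map_sum]
    refine Finset.sum_congr rfl fun i hi => ?_
    rw [← (Finset.mem_filter.1 hi).2]
    simp [atom, nsmul_eq_mul]
  have hcard :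
      4 * s.card = ∑ l ∈ Finset.range n, 4 * (s.filter fun i => i.1.val = l).card := by
    rw [← Finset.mul_sum, Finset.card_eq_sum_card_fiberwise hmaps]
  rw [hsum, hcard]
  refine emb_sum_shift_mul_pow_mem_wordBall ha (fun l => ?_) n
  refine emb_sum_mem_wordBall _ _ fun i _ => ?_
  rw [hd]
  exact commutatorElement_mem_wordBall i.2.1.2 i.2.2.2

end WreathQuot

open WreathQuot in
/-- For an odd prime `p` and `G = (C₂ ≀ C_p)/Z(C₂ ≀ C_p)`: for every
generating set `X` of `G`, every element of `G` is a word of length at most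
`(13/2)(p-1)` in `X ∪ X⁻¹`; i.e. the diameter of every Cayley graph of `G`
is at most `(13/2)(p-1)`. -/
theorem diam_quot_le (p : ℕ) (hp : p.Prime) (hodd : Odd p)
    (X : Set (WreathQuot p)) (hgen : Subgroup.closure X = ⊤) :
    ∀ g : WreathQuot p, ∃ l : List (WreathQuot p),
      (∀ x ∈ l, x ∈ X ∨ x⁻¹ ∈ X) ∧
      2 * l.length ≤ 13 * (p - 1) ∧
      l.prod = g := by
  have := Fact.mk hp
  intro g
  obtain ⟨a, ha, hk⟩ := exists_mem_toAdd_rotPart_ne_zero hgen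
  choose d hd using exists_emb_eq_commutatorElement (p := p)
  obtain ⟨n, hpn, hn2p, hn⟩ := exists_nsmul_eq hk (rotPart p g).toAdd
  obtain ⟨u, hu⟩ := exists_emb_eq_of_rotPart_eq_one (q := g * (a ^ n)⁻¹) <| by
    rw [map_mul, map_inv, map_pow, mul_inv_eq_one]
    exact Multiplicative.toAdd.injective (by rw [toAdd_pow, hn])
  obtain ⟨s, hs, hsum⟩ := exists_finset_card_le_finrank_sum_eq
    (span_range_mkQ_atom_eq_top hodd hgen hk hd) ((constants p).mkQ u)
  rw [finrank_quotient_constants] at hs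
  have hword : emb (∑ i ∈ s, atom X d (rotPart p a).toAdd i) * a ^ n = g := by
    simp only [Function.comp_apply, ← map_sum] at hsum
    rw [emb_eq_emb_iff.2 ((Submodule.Quotient.eq _).1 hsum), hu, inv_mul_cancel_right]
  obtain ⟨l, hl, hlen, hprod⟩ := hword ▸ emb_sum_atom_mul_pow_mem_wordBall ha hd s hpn
  have := hp.two_le
  have : p ≠ 2 := by rintro rfl; exact (by decide : ¬ Odd 2) hodd
  exact ⟨l, hl, by omega, hprod⟩
end

section
/- Let p be an odd prime and W = C₂ ≀ C_p. Then for every generating set X of W, the diameter of the Cayley graph Cay(W,X) is at most 20(p−1). In particular, since |W| = p·2^p, the worst diameter of W is O(log|W|). -/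
/-!
Choose `x ∈ X` outside the base `V = (ZMod p → ZMod 2)`; it acts on `V` by a shift `a ≠ 0`.
Let `K ≤ V` be the span of all shifts of the commutators `⁅y, x⁆`, `y ∈ X`. It is a normal
subgroup, and `x` commutes with every generator modulo `K`, so `x` is central modulo `K`. Hence
`K` contains every `⁅f, x⁆ = f - shift a f` with `f ∈ V`, and these make up the whole
parity-zero hyperplane of `V`.

Over `𝔽₂` a vector of `K` is the sum of at most `dim V = p` shifted commutators
`x^d ⁅y, x⁆ x^(-d)`. Grouping them by `d`, the element `v * x^p` is the word
`c₀ x c₁ x ⋯ c_(p-1) x`, where `c_d` is the product of the commutators with shift `d`;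
its length is at most `p + 4p`. Every `g` equals `b * v * x^p * x^s` with `s < p`, `v` of
parity zero, and `b = 1` or a fixed base element `b₀` of odd parity: `b₀ = x^p` if `x` has odd
parity (as `p` is odd), and `b₀ = z * x^(-s')` for a generator `z` of odd parity otherwise.
That gives length `7p ≤ 20 (p - 1)`.
-/

open Subgroup SemidirectProduct
open scoped commutatorElement

section WordBall

variable {G : Type*} [Group G]

def InWordBall (X : Set G) (n : ℕ) (g : G) : Prop :=
  ∃ l : List G, (∀ x ∈ l, x ∈ X ∨ x⁻¹ ∈ X) ∧ l.length ≤ n ∧ l.prod = g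

namespace InWordBall

variable {X : Set G} {m n : ℕ} {g h : G}

lemma one : InWordBall X 0 (1 : G) := ⟨[], by simp, le_rfl, rfl⟩

lemma of_mem (hg : g ∈ X) : InWordBall X 1 g := ⟨[g], by simp [hg], le_rfl, by simp⟩

lemma mono (hg : InWordBall X m g) (hmn : m ≤ n) : InWordBall X n g :=
  let ⟨l, hlX, hlen, hprod⟩ := hg
  ⟨l, hlX, hlen.trans hmn, hprod⟩

lemma mul (hg : InWordBall X m g) (hh : InWordBall X n h) : InWordBall X (m + n) (g * h) := by
  obtain ⟨l, hlX, hl, rfl⟩ := hg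
  obtain ⟨l', hl'X, hl', rfl⟩ := hh
  refine ⟨l ++ l', ?_, ?_, List.prod_append⟩
  · simpa only [List.mem_append, or_imp, forall_and] using ⟨hlX, hl'X⟩
  · simp only [List.length_append]
    omega

lemma inv (hg : InWordBall X m g) : InWordBall X m g⁻¹ := by
  obtain ⟨l, hlX, hl, rfl⟩ := hg
  refine ⟨(l.map (·⁻¹)).reverse, ?_, by simpa using hl, (List.prod_inv_reverse l).symm⟩
  simp only [List.mem_reverse, List.mem_map]
  rintro _ ⟨x, hx, rfl⟩
  rw [inv_inv]
  exact (hlX x hx).symm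

lemma pow (hg : InWordBall X m g) (k : ℕ) : InWordBall X (k * m) (g ^ k) := by
  induction k with
  | zero => simpa using one
  | succ k ih => simpa [pow_succ, add_mul] using ih.mul hg

lemma commutator (hg : InWordBall X m g) (hh : InWordBall X n h) :
    InWordBall X (m + n + m + n) ⁅g, h⁆ := by
  rw [commutatorElement_def]
  exact ((hg.mul hh).mul hg.inv).mul hh.inv

lemma map_sum {A ι : Type*} [AddCommMonoid A] (ψ : Multiplicative A →* G) {s : Finset ι}
    {f : ι → A} {k : ℕ} (hf : ∀ i ∈ s, InWordBall X k (ψ (.ofAdd (f i)))) :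
    InWordBall X (s.card * k) (ψ (.ofAdd (∑ i ∈ s, f i))) := by
  classical
  induction s using Finset.induction_on with
  | empty => simpa using one
  | insert i s hi ih =>
    rw [Finset.sum_insert hi, ofAdd_add, map_mul, Finset.card_insert_of_notMem hi, add_mul,
      one_mul, add_comm]
    exact (hf i (s.mem_insert_self i)).mul (ih fun j hj ↦ hf j (Finset.mem_insert_of_mem hj))

end InWordBall

lemma exists_mem_apply_ne_one {H : Type*} [Group H] {X : Set G} (hX : closure X = ⊤)
    (f : G →* H) {g : G} (hg : f g ≠ 1) : ∃ y ∈ X, f y ≠ 1 := by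
  by_contra! hXf
  have : closure X ≤ f.ker := (closure_le _).mpr hXf
  exact hg (this (hX ▸ mem_top g))

lemma commutatorElement_mem_of_closure_eq_top_s10 {X : Set G} (hX : closure X = ⊤) (K : Subgroup G)
    [K.Normal] (x : G) (hXK : ∀ y ∈ X, ⁅y, x⁆ ∈ K) (w : G) : ⁅w, x⁆ ∈ K := by
  let π := QuotientGroup.mk' K
  have hπ : ∀ v, ⁅v, x⁆ ∈ K ↔ π v * π x = π x * π v := fun v ↦ by
    rw [← QuotientGroup.eq_one_iff, ← QuotientGroup.mk'_apply, map_commutatorElement,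
      commutatorElement_eq_one_iff_mul_comm]
  have hXC : X ⊆ (centralizer {π x}).comap π := fun y hy ↦
    mem_centralizer_singleton_iff.mpr ((hπ y).mp (hXK y hy))
  have hC : w ∈ (centralizer {π x}).comap π := (closure_le _).mpr hXC (hX ▸ mem_top w)
  exact (hπ w).mpr (mem_centralizer_singleton_iff.mp hC)

end WordBall

namespace SemidirectProduct

section

variable {N H : Type*} [Group N] [Group H] {φ : H →* MulAut N}

lemma right_pow (w : N ⋊[φ] H) (n : ℕ) : (w ^ n).right = w.right ^ n :=
  map_pow rightHom w n

lemma inl_left_of_right_eq_one {w : N ⋊[φ] H} (hw : w.right = 1) : inl w.left = w := by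
  conv_rhs => rw [← inl_left_mul_inr_right w, hw, map_one, mul_one]

end

lemma commutatorElement_right {N H : Type*} [Group N] [CommGroup H] {φ : H →* MulAut N}
    (y x : N ⋊[φ] H) : ⁅y, x⁆.right = 1 := by
  rw [← rightHom_eq_right, map_commutatorElement, commutatorElement_eq_one_iff_mul_comm, mul_comm]

variable {N H : Type*} [CommGroup N] [Group H] {φ : H →* MulAut N}

lemma mul_inl_mul_inv (w : N ⋊[φ] H) (n : N) : w * inl n * w⁻¹ = inl (φ w.right n) := by
  have hr : (inr w.right * inl n * (inr w.right)⁻¹ : N ⋊[φ] H) = inl (φ w.right n) := by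
    rw [inl_aut, map_inv]
  calc w * inl n * w⁻¹
      = inl w.left * (inr w.right * inl n * (inr w.right)⁻¹) * (inl w.left)⁻¹ := by
        conv_lhs => rw [← inl_left_mul_inr_right w]
        group
    _ = inl (w.left * φ w.right n * w.left⁻¹) := by
        rw [hr, ← map_inv, ← map_mul, ← map_mul]
    _ = inl (φ w.right n) := by rw [mul_inv_cancel_comm]

lemma commutatorElement_inl (n : N) (w : N ⋊[φ] H) :
    ⁅(inl n : N ⋊[φ] H), w⁆ = inl (n * (φ w.right n)⁻¹) := by
  rw [commutatorElement_def, mul_assoc (inl n), mul_assoc (inl n), ← map_inv, mul_inl_mul_inv,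
    map_inv, ← map_mul]

end SemidirectProduct

lemma exists_finset_sum_eq_of_mem_span {ι E : Type*} [AddCommGroup E] [Module (ZMod 2) E]
    [FiniteDimensional (ZMod 2) E] (v : ι → E) {w : E}
    (hw : w ∈ Submodule.span (ZMod 2) (Set.range v)) :
    ∃ T : Finset ι, T.card ≤ Module.finrank (ZMod 2) E ∧ ∑ i ∈ T, v i = w := by
  classical
  obtain ⟨κ, f, hf, hspan, hli⟩ := exists_linearIndependent' (ZMod 2) v
  have : Fintype κ := @Fintype.ofFinite _ hli.finite
  obtain ⟨c, rfl⟩ := (Submodule.mem_span_range_iff_exists_fun _).mp (hspan ▸ hw)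
  refine ⟨(Finset.univ.filter (c · = 1)).map ⟨f, hf⟩, ?_, ?_⟩
  · rw [Finset.card_map]
    exact (Finset.card_filter_le _ _).trans hli.fintype_card_le_finrank
  · rw [Finset.sum_map, Finset.sum_filter]
    refine Finset.sum_congr rfl fun k _ ↦ ?_
    rcases (by decide : ∀ z : ZMod 2, z = 0 ∨ z = 1) (c k) with h | h <;> simp [h]

lemma ZMod.val_mul_inv_nsmul {p : ℕ} [Fact p.Prime] {a : ZMod p} (ha : a ≠ 0) (c : ZMod p) :
    (c * a⁻¹).val • a = c := by
  rw [nsmul_eq_mul, ZMod.natCast_val, ZMod.cast_id, mul_assoc, inv_mul_cancel₀ ha, mul_one]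

namespace Wreath

variable {p : ℕ}

def shift (c : ZMod p) : (ZMod p → ZMod 2) →ₗ[ZMod 2] (ZMod p → ZMod 2) :=
  LinearMap.funLeft _ _ (· + c)

@[simp] lemma shift_apply (c : ZMod p) (f : ZMod p → ZMod 2) (i : ZMod p) :
    shift c f i = f (i + c) := rfl

@[simp] lemma shift_zero (f : ZMod p → ZMod 2) : shift 0 f = f := by
  ext i; simp

lemma shift_shift (c c' : ZMod p) (f : ZMod p → ZMod 2) :
    shift c (shift c' f) = shift (c + c') f := by
  ext i; simp [add_assoc]

lemma wreathShift_apply (r : Multiplicative (ZMod p)) (f : ZMod p → ZMod 2) :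
    wreathShift p r (.ofAdd f) = .ofAdd (shift r.toAdd f) := rfl

lemma right_pow_self (w : Wreath p) : (w ^ p).right = 1 := by
  rw [right_pow, ← toAdd_eq_zero, toAdd_pow, nsmul_eq_mul, ZMod.natCast_self, zero_mul]

lemma pow_mul_inl_mul_inv_pow (x : Wreath p) (d : ℕ) (u : ZMod p → ZMod 2) :
    x ^ d * inl (.ofAdd u) * (x ^ d)⁻¹ = inl (.ofAdd (shift (d • x.right.toAdd) u)) := by
  rw [mul_inl_mul_inv, right_pow, wreathShift_apply, toAdd_pow]

section Parity

variable [NeZero p]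

def parity : (ZMod p → ZMod 2) →ₗ[ZMod 2] ZMod 2 := ∑ i, LinearMap.proj i

lemma parity_apply (f : ZMod p → ZMod 2) : parity f = ∑ i, f i := by
  simp [parity]

@[simp] lemma parity_shift (c : ZMod p) (f : ZMod p → ZMod 2) :
    parity (shift c f) = parity f := by
  simpa [parity_apply] using Equiv.sum_comp (Equiv.addRight c) f

def parityHom : Wreath p →* Multiplicative (ZMod 2) :=
  lift parity.toAddMonoidHom.toMultiplicative 1 fun r ↦ by
    ext f
    simp [wreathShift_apply]

lemma parityHom_inl (f : WreathBase p) : parityHom (inl f) = .ofAdd (parity f.toAdd) :=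
  lift_inl ..

end Parity

variable [Fact p.Prime] {X : Set (Wreath p)} {x : Wreath p}

lemma exists_right_eq_pow (hx : x.right ≠ 1) (w : Wreath p) :
    ∃ s < p, w.right = x.right ^ s := by
  have ha : x.right.toAdd ≠ 0 := hx
  refine ⟨(w.right.toAdd * x.right.toAdd⁻¹).val, ZMod.val_lt _, ?_⟩
  apply Multiplicative.toAdd.injective
  rw [toAdd_pow, ZMod.val_mul_inv_nsmul ha]

lemma range_id_sub_shift {a : ZMod p} (ha : a ≠ 0) :
    LinearMap.range (LinearMap.id - shift a) = LinearMap.ker (parity (p := p)) := by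
  have hle : LinearMap.range (LinearMap.id - shift a) ≤ LinearMap.ker (parity (p := p)) := by
    rintro _ ⟨f, rfl⟩
    simp
  have hker : LinearMap.ker (LinearMap.id - shift a) ≤ (ZMod 2) ∙ (fun _ ↦ 1) := by
    intro f hf
    have hfix : shift a f = f := (sub_eq_zero.mp hf).symm
    have horbit : ∀ k : ℕ, f (k • a) = f 0 := by
      intro k
      induction k with
      | zero => simp
      | succ k ih => rw [succ_nsmul, ← shift_apply a f, hfix, ih]
    refine Submodule.mem_span_singleton.mpr ⟨f 0, funext fun i ↦ ?_⟩
    simpa [ZMod.val_mul_inv_nsmul ha] using (horbit (i * a⁻¹).val).symm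
  have hdim : Module.finrank (ZMod 2) (ZMod p → ZMod 2) = p := by
    simp
  have hparity : LinearMap.ker (parity (p := p)) ≠ ⊤ := by
    intro htop
    have : Pi.single (0 : ZMod p) (1 : ZMod 2) ∈ LinearMap.ker parity :=
      htop ▸ Submodule.mem_top
    simp [parity_apply] at this
  refine Submodule.eq_of_le_of_finrank_le hle ?_
  have h1 := Submodule.finrank_lt hparity
  have h2 := (Submodule.finrank_mono hker).trans_eq
    (finrank_span_singleton fun h ↦ by simpa using congrFun h 0)
  have h3 := LinearMap.finrank_range_add_finrank_ker (LinearMap.id - shift (p := p) a)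
  omega

lemma inWordBall_inl_sum_shift_mul_pow (hx : x ∈ X) {m : ℕ} {u : ℕ → ZMod p → ZMod 2}
    {k : ℕ → ℕ} (hu : ∀ d < m, InWordBall X (k d) (inl (.ofAdd (u d)))) :
    InWordBall X (m + ∑ d ∈ Finset.range m, k d)
      (inl (.ofAdd (∑ d ∈ Finset.range m, shift (d • x.right.toAdd) (u d))) * x ^ m) := by
  induction m with
  | zero => simpa using InWordBall.one
  | succ m ih =>
    have hw : inl (.ofAdd (∑ d ∈ Finset.range (m + 1), shift (d • x.right.toAdd) (u d)))
          * x ^ (m + 1)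
        = inl (.ofAdd (∑ d ∈ Finset.range m, shift (d • x.right.toAdd) (u d))) * x ^ m
          * inl (.ofAdd (u m)) * x := by
      rw [Finset.sum_range_succ, ofAdd_add, map_mul, ← pow_mul_inl_mul_inv_pow, pow_succ]
      group
    rw [hw, Finset.sum_range_succ]
    refine (((ih fun d hd ↦ hu d (hd.trans m.lt_succ_self)).mul (hu m m.lt_succ_self)).mul
      (.of_mem hx)).mono ?_
    omega

def shiftedCommutator (X : Set (Wreath p)) (x : Wreath p) (i : ZMod p × X) :
    ZMod p → ZMod 2 :=
  shift i.1 ⁅(i.2 : Wreath p), x⁆.left.toAdd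

lemma ker_parity_le_span_shiftedCommutator (hX : closure X = ⊤) (hx : x.right ≠ 1) :
    LinearMap.ker parity ≤ Submodule.span (ZMod 2) (Set.range (shiftedCommutator X x)) := by
  set N := Submodule.span (ZMod 2) (Set.range (shiftedCommutator X x))
  have hN : ∀ c, ∀ v ∈ N, shift c v ∈ N := by
    intro c v hv
    refine Submodule.span_induction
      (fun _ ⟨i, hi⟩ ↦ Submodule.subset_span ⟨(c + i.1, i.2), ?_⟩)
      (by simp) (fun _ _ _ _ h h' ↦ by simpa using N.add_mem h h')
      (fun r _ _ h ↦ by simpa using N.smul_mem r h) hv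
    rw [← hi, shiftedCommutator, shiftedCommutator, shift_shift]
  let K : Subgroup (Wreath p) := N.toAddSubgroup.toSubgroup.map inl
  have hK : K.Normal := ⟨fun _ ⟨n, hn, hnk⟩ w ↦ hnk ▸ by
    rw [mul_inl_mul_inv, ← ofAdd_toAdd n, wreathShift_apply]
    exact mem_map_of_mem _ (hN _ _ hn)⟩
  have hXK : ∀ y ∈ X, ⁅y, x⁆ ∈ K := fun y hy ↦ by
    rw [← inl_left_of_right_eq_one (commutatorElement_right y x)]
    have : ⁅y, x⁆.left.toAdd ∈ N := Submodule.subset_span ⟨(0, ⟨y, hy⟩), shift_zero _⟩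
    exact mem_map_of_mem _ this
  intro v hv
  obtain ⟨f, rfl⟩ := (range_id_sub_shift (a := x.right.toAdd) hx).ge hv
  have hf := commutatorElement_mem_of_closure_eq_top_s10 hX K x hXK (inl (.ofAdd f))
  rwa [commutatorElement_inl, wreathShift_apply, ← ofAdd_neg, ← ofAdd_add, ← sub_eq_add_neg,
    mem_map_iff_mem inl_injective] at hf

lemma inWordBall_inl_mul_pow_of_mem_span (hx : x ∈ X) (hxr : x.right ≠ 1)
    {v : ZMod p → ZMod 2}
    (hv : v ∈ Submodule.span (ZMod 2) (Set.range (shiftedCommutator X x))) :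
    InWordBall X (5 * p) (inl (.ofAdd v) * x ^ p) := by
  classical
  have ha : x.right.toAdd ≠ 0 := hxr
  obtain ⟨T, hT, rfl⟩ := exists_finset_sum_eq_of_mem_span _ hv
  rw [Module.finrank_fintype_fun_eq_card, ZMod.card] at hT
  let pos : ZMod p × X → ℕ := fun i ↦ (i.1 * x.right.toAdd⁻¹).val
  have hpos : ∀ i ∈ T, pos i ∈ Finset.range p :=
    fun i _ ↦ Finset.mem_range.mpr (ZMod.val_lt _)
  have hsum : ∑ d ∈ Finset.range p,
      shift (d • x.right.toAdd) (∑ i ∈ T with pos i = d, ⁅(i.2 : Wreath p), x⁆.left.toAdd)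
      = ∑ i ∈ T, shiftedCommutator X x i := by
    rw [← Finset.sum_fiberwise_of_maps_to hpos]
    refine Finset.sum_congr rfl fun d _ ↦ ?_
    rw [map_sum]
    refine Finset.sum_congr rfl fun i hi ↦ ?_
    rw [← (Finset.mem_filter.mp hi).2, ZMod.val_mul_inv_nsmul ha]
    rfl
  have hcard : ∑ d ∈ Finset.range p, (T.filter (pos · = d)).card * 4 = T.card * 4 := by
    rw [← Finset.sum_mul, ← Finset.card_eq_sum_card_fiberwise hpos]
  have hblock : ∀ d, InWordBall X ((T.filter (pos · = d)).card * 4)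
      (inl (.ofAdd (∑ i ∈ T with pos i = d, ⁅(i.2 : Wreath p), x⁆.left.toAdd))) := by
    intro d
    refine InWordBall.map_sum (inl : WreathBase p →* Wreath p) fun i _ ↦ ?_
    rw [ofAdd_toAdd, inl_left_of_right_eq_one (commutatorElement_right _ _)]
    exact (InWordBall.of_mem i.2.2).commutator (.of_mem hx)
  have hw := inWordBall_inl_sum_shift_mul_pow hx fun d (_ : d < p) ↦ hblock d
  rw [hsum, hcard] at hw
  exact hw.mono (by omega)

lemma inWordBall_mul_pow_of_mem_ker (hX : closure X = ⊤) (hx : x ∈ X) (hxr : x.right ≠ 1)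
    {e : Wreath p} (her : e.right = 1) (heπ : parityHom e = 1) :
    InWordBall X (5 * p) (e * x ^ p) := by
  rw [← inl_left_of_right_eq_one her] at heπ ⊢
  rw [parityHom_inl, ofAdd_eq_one] at heπ
  exact inWordBall_inl_mul_pow_of_mem_span hx hxr
    (ker_parity_le_span_shiftedCommutator hX hxr heπ)

lemma exists_inWordBall_parityHom_ne_one (hodd : Odd p) (hX : closure X = ⊤) (hx : x ∈ X)
    (hxr : x.right ≠ 1) :
    ∃ b : Wreath p, b.right = 1 ∧ parityHom b ≠ 1 ∧ InWordBall X p b := by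
  by_cases hxπ : parityHom x = 1
  · obtain ⟨z, hz, hzπ⟩ := exists_mem_apply_ne_one hX parityHom
      (g := inl (.ofAdd (Pi.single 0 1))) (by simp [parityHom_inl, parity_apply])
    obtain ⟨s, hs, hzs⟩ := exists_right_eq_pow hxr z
    refine ⟨z * (x ^ s)⁻¹, ?_, by simpa [hxπ] using hzπ, ?_⟩
    · rw [mul_right, inv_right, right_pow, hzs, mul_inv_cancel]
    · exact ((InWordBall.of_mem hz).mul ((InWordBall.of_mem hx).pow s).inv).mono (by omega)
  · refine ⟨x ^ p, right_pow_self x, ?_, ((InWordBall.of_mem hx).pow p).mono (by simp)⟩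
    obtain ⟨k, rfl⟩ := hodd
    have hsq : ∀ q : Multiplicative (ZMod 2), q ^ 2 = 1 := by decide
    rwa [map_pow, pow_succ, pow_mul, hsq, one_pow, one_mul]

theorem inWordBall_of_closure_eq_top (hodd : Odd p) (hX : closure X = ⊤) (g : Wreath p) :
    InWordBall X (7 * p) g := by
  obtain ⟨x, hx, hxr⟩ := exists_mem_apply_ne_one hX rightHom
    (g := inr (.ofAdd (1 : ZMod p))) (by simp)
  obtain ⟨b, hbr, hbπ, hb⟩ := exists_inWordBall_parityHom_ne_one hodd hX hx hxr
  obtain ⟨s, hs, hgs⟩ := exists_right_eq_pow hxr g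
  obtain ⟨e, rfl⟩ : ∃ e, g = e * x ^ p * x ^ s :=
    ⟨g * (x ^ s)⁻¹ * (x ^ p)⁻¹, by group⟩
  have her : e.right = 1 := by
    rwa [mul_right, mul_right, right_pow_self, mul_one, right_pow, mul_eq_right] at hgs
  have hxs := (InWordBall.of_mem hx).pow s
  by_cases heπ : parityHom e = 1
  · exact ((inWordBall_mul_pow_of_mem_ker hX hx hxr her heπ).mul hxs).mono (by omega)
  · have hbeπ : parityHom (b⁻¹ * e) = 1 := by
      have hZ2 : ∀ q r : Multiplicative (ZMod 2), q ≠ 1 → r ≠ 1 → q⁻¹ * r = 1 := by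
        decide
      rw [map_mul, map_inv]
      exact hZ2 _ _ hbπ heπ
    have hber : (b⁻¹ * e).right = 1 := by
      rw [mul_right, inv_right, hbr, her, inv_one, one_mul]
    have hg : e * x ^ p * x ^ s = b * (b⁻¹ * e * x ^ p) * x ^ s := by group
    rw [hg]
    exact ((hb.mul (inWordBall_mul_pow_of_mem_ker hX hx hxr hber hbeπ)).mul hxs).mono
      (by omega)

end Wreath

/-- For an odd prime `p` and `W = C₂ ≀ C_p`: for every generating set `X` of
`W`, every element of `W` is a word of length at most `20(p-1)` in
`X ∪ X⁻¹`, i.e. every Cayley graph of `W` has diameter at most `20(p-1)`.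
Since `|W| = p·2^p`, the worst diameter of `W` is `O(log |W|)`. -/
theorem diam_wreath_le (p : ℕ) (hp : p.Prime) (hodd : Odd p) :
    (∀ X : Set (Wreath p), Subgroup.closure X = ⊤ →
      ∀ g : Wreath p, ∃ l : List (Wreath p),
        (∀ x ∈ l, x ∈ X ∨ x⁻¹ ∈ X) ∧
        l.length ≤ 20 * (p - 1) ∧
        l.prod = g) ∧
    Nat.card (Wreath p) = p * 2 ^ p := by
  have : Fact p.Prime := ⟨hp⟩
  refine ⟨fun X hX g ↦ (Wreath.inWordBall_of_closure_eq_top hodd hX g).mono ?_, ?_⟩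
  · have := hp.two_le
    omega
  · simp [SemidirectProduct.card, Nat.card_eq_fintype_card, mul_comm]
end
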